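/- Let P = (S, 𝓛) be a thick nondegenerate polar space of rank at least 3 and let W be a proper subspace of P that is contained in some hyperplane of P but is not itself a hyperplane. If K₁, K₂, K₃ are pairwise nonparallel affine lines of D(P, W) such that [K₁] ≡ [K₂], [K₂] ≡ [K₃], and [K₃] ≡ [K₁], then the points K₁^∞, K₂^∞, K₃^∞ lie on a common line of P. -/

import Mathlib

namespace PolarComp

variable {S : Type*}

/-- A partial linear space: every line has at least two points, and two
distinct lines share at most one point. -/
def IsPLS (𝓛 : Set (Set S)) : Prop :=
  (∀ l ∈ 𝓛, ∃ a b : S, a ≠ b ∧ a ∈ l ∧ b ∈ l) ∧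
  (∀ l ∈ 𝓛, ∀ m ∈ 𝓛, l ≠ m → ∀ a b : S, a ∈ l ∩ m → b ∈ l ∩ m → a = b)

/-- Thick: every line has at least three points. -/
def Thick (𝓛 : Set (Set S)) : Prop :=
  ∀ l ∈ 𝓛, ∃ a b c : S, a ≠ b ∧ a ≠ c ∧ b ≠ c ∧ a ∈ l ∧ b ∈ l ∧ c ∈ l

/-- Two points are collinear iff they lie on a common line (every point is
collinear with itself). -/
def Collin (𝓛 : Set (Set S)) (a b : S) : Prop :=
  a = b ∨ ∃ l ∈ 𝓛, a ∈ l ∧ b ∈ l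

/-- Nondegenerate: no point is collinear with all other points. -/
def Nondegenerate (𝓛 : Set (Set S)) : Prop :=
  ∀ a : S, ∃ b : S, ¬ Collin 𝓛 a b

/-- The one-or-all axiom: a point off a line is collinear with exactly one or
with all points of the line. -/
def OneOrAll (𝓛 : Set (Set S)) : Prop :=
  ∀ l ∈ 𝓛, ∀ a : S, a ∉ l →
    (∃! b, b ∈ l ∧ Collin 𝓛 a b) ∨ (∀ b ∈ l, Collin 𝓛 a b)

/-- A polar space is a partial linear space satisfying the one-or-all axiom. -/
def IsPolarSpace (𝓛 : Set (Set S)) : Prop := IsPLS 𝓛 ∧ OneOrAll 𝓛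

/-- A subspace: contains every line meeting it in at least two points. -/
def IsSubspace (𝓛 : Set (Set S)) (X : Set S) : Prop :=
  ∀ l ∈ 𝓛, (∃ a ∈ l ∩ X, ∃ b ∈ l ∩ X, a ≠ b) → l ⊆ X

/-- A hyperplane: a proper subspace meeting every line. -/
def IsHyperplane (𝓛 : Set (Set S)) (X : Set S) : Prop :=
  IsSubspace 𝓛 X ∧ X ≠ Set.univ ∧ ∀ l ∈ 𝓛, (l ∩ X).Nonempty

/-- A singular set: any two of its points are collinear. -/
def SingularSet (𝓛 : Set (Set S)) (X : Set S) : Prop :=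
  ∀ a ∈ X, ∀ b ∈ X, Collin 𝓛 a b

/-- Rank at least `n`: there is a strictly increasing chain of `n` nonempty
singular subspaces. -/
def RankAtLeast (𝓛 : Set (Set S)) (n : ℕ) : Prop :=
  ∃ X : Fin n → Set S, StrictMono X ∧
    ∀ i, (X i).Nonempty ∧ SingularSet 𝓛 (X i) ∧ IsSubspace 𝓛 (X i)

/-- `perp 𝓛 a` is the set of points collinear with `a`. -/
def perp (𝓛 : Set (Set S)) (a : S) : Set S := {b | Collin 𝓛 a b}

/-- The radical of `X`: `X ∩ X^⊥`. -/
def radSet (𝓛 : Set (Set S)) (X : Set S) : Set S :=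
  X ∩ {a | ∀ b ∈ X, Collin 𝓛 a b}

/-- The lines of the complement `D(P, W)`. -/
def compLines (𝓛 : Set (Set S)) (W : Set S) : Set (Set S) :=
  {K | ∃ k ∈ 𝓛, ¬ k ⊆ W ∧ K = k \ W}

/-- Two proper lines are parallel iff their closures meet in `W`. -/
def Parallel (𝓛 : Set (Set S)) (W : Set S) (K L : Set S) : Prop :=
  ∃ k ∈ 𝓛, ∃ l ∈ 𝓛, ¬ k ⊆ W ∧ ¬ l ⊆ W ∧ K = k \ W ∧ L = l \ W ∧
    (k ∩ l ∩ W).Nonempty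

/-- A proper line is affine iff its closure meets `W`. -/
def IsAffineLine (𝓛 : Set (Set S)) (W : Set S) (K : Set S) : Prop :=
  ∃ k ∈ 𝓛, ¬ k ⊆ W ∧ K = k \ W ∧ (k ∩ W).Nonempty

/-- `AtInfinity 𝓛 W K a` says that `a = K^∞`, i.e. `a` is a point of `K̄ ∩ W`. -/
def AtInfinity (𝓛 : Set (Set S)) (W : Set S) (K : Set S) (a : S) : Prop :=
  ∃ k ∈ 𝓛, ¬ k ⊆ W ∧ K = k \ W ∧ a ∈ k ∩ W

/-- A deep point of `W`: a point of `W` which is `L^∞` for no affine line `L`. -/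
def IsDeepPoint (𝓛 : Set (Set S)) (W : Set S) (a : S) : Prop :=
  a ∈ W ∧ ∀ K : Set S, ¬ AtInfinity 𝓛 W K a

/-- A plane: a minimal singular subspace containing a given line and a given
point not on that line. -/
def IsPlane (𝓛 : Set (Set S)) (X : Set S) : Prop :=
  ∃ l ∈ 𝓛, ∃ a : S, a ∉ l ∧ a ∈ X ∧ l ⊆ X ∧
    SingularSet 𝓛 X ∧ IsSubspace 𝓛 X ∧
    ∀ Y : Set S, SingularSet 𝓛 Y → IsSubspace 𝓛 Y → l ⊆ Y → a ∈ Y → Y ⊆ X → Y = X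

/-- `Π^∞`: the points at infinity of a plane of the complement with closure `Pl`. -/
def planeInfinity (𝓛 : Set (Set S)) (W : Set S) (Pl : Set S) : Set S :=
  {a | ∃ M : Set S, IsAffineLine 𝓛 W M ∧ M ⊆ Pl \ W ∧ AtInfinity 𝓛 W M a}

/-- A deep line: an improper line `L ⊆ W` which is `Π^∞` for no plane of the
complement. -/
def IsDeepLine (𝓛 : Set (Set S)) (W : Set S) (L : Set S) : Prop :=
  L ∈ 𝓛 ∧ L ⊆ W ∧
    ∀ Pl : Set S, IsPlane 𝓛 Pl → ¬ Pl ⊆ W → planeInfinity 𝓛 W Pl ≠ L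

/-- The relation `∥*` on proper lines of the complement. -/
def ParStar (𝓛 : Set (Set S)) (W : Set S) (K₁ K₂ : Set S) : Prop :=
  K₁ ∈ compLines 𝓛 W ∧ K₂ ∈ compLines 𝓛 W ∧ K₁ ∩ K₂ = ∅ ∧
    ∃ L₁ ∈ compLines 𝓛 W, ∃ L₂ ∈ compLines 𝓛 W, L₁ ≠ L₂ ∧
      (L₁ ∩ L₂).Nonempty ∧ (L₁ ∩ K₁).Nonempty ∧ (L₁ ∩ K₂).Nonempty ∧
      (L₂ ∩ K₁).Nonempty ∧ (L₂ ∩ K₂).Nonempty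

/-- `∥ᵗ`: the transitive closure of `∥*`. -/
def ParT (𝓛 : Set (Set S)) (W : Set S) : Set S → Set S → Prop :=
  Relation.TransGen (ParStar 𝓛 W)

/-- The anti-euclidean relation `~` on affine lines: `K₁ ~ K₂` iff no affine
line through a point of `K₁` is parallel to `K₂`. -/
def Tilde (𝓛 : Set (Set S)) (W : Set S) (K₁ K₂ : Set S) : Prop :=
  ∀ a ∈ K₁, ∀ M : Set S, IsAffineLine 𝓛 W M → a ∈ M → ¬ Parallel 𝓛 W M K₂

/-- `[K₁] ≡ [K₂]`: `M ~ N` and `N ~ M` for all `M ∥ K₁` and `N ∥ K₂`. -/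
def EquivCls (𝓛 : Set (Set S)) (W : Set S) (K₁ K₂ : Set S) : Prop :=
  ∀ M N : Set S, IsAffineLine 𝓛 W M → IsAffineLine 𝓛 W N →
    Parallel 𝓛 W M K₁ → Parallel 𝓛 W N K₂ → Tilde 𝓛 W M N ∧ Tilde 𝓛 W N M

/-- The parallel class of an affine line. -/
def parClass (𝓛 : Set (Set S)) (W : Set S) (L : Set S) : Set (Set S) :=
  {M | IsAffineLine 𝓛 W M ∧ Parallel 𝓛 W M L}

/-- The class of affine lines with point at infinity `w`. -/
def classAt (𝓛 : Set (Set S)) (W : Set S) (w : S) : Set (Set S) :=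
  {L | IsAffineLine 𝓛 W L ∧ AtInfinity 𝓛 W L w}

/-- A witness that the polar space embeds in a projective space `ℙ(F, V)`. -/
structure EmbeddingWitness (𝓛 : Set (Set S)) where
  F : Type
  [iF : DivisionRing F]
  V : Type
  [iV : AddCommGroup V]
  [iM : Module F V]
  f : S → Projectivization F V
  inj : Function.Injective f
  spanning : ∀ T : Submodule F V, (∀ s : S, Projectivization.submodule (f s) ≤ T) → T = ⊤
  lines2dim : ∀ l ∈ 𝓛, ∃ U : Submodule F V, Module.finrank F ↥U = 2 ∧
    f '' l = {p | ∃ v : V, ∃ hv : v ≠ 0, v ∈ U ∧ p = Projectivization.mk F v hv}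

/-- An embeddable polar space. -/
def Embeddable (𝓛 : Set (Set S)) : Prop := Nonempty (EmbeddingWitness 𝓛)


/-!
The condition `[Kᵢ] ≡ [Kⱼ]` forbids any point outside `W` from being collinear with both
`Kᵢ^∞` and `Kⱼ^∞`. Since the closure of `Kᵢ` leaves `W`, this forces the three points at
infinity to be pairwise collinear, and every point collinear with two of them lies in `W`,
hence in a hyperplane `H ⊇ W`. If they formed a triangle, the perp of each vertex would then
lie in `H`; but in a nondegenerate polar space the perps of two collinear points are never
contained in one proper subspace.
-/

section PolarSpace

variable {𝓛 : Set (Set S)}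

theorem Collin.symm {a b : S} (h : Collin 𝓛 a b) : Collin 𝓛 b a := by
  rcases h with rfl | ⟨l, hl, ha, hb⟩
  · exact Or.inl rfl
  · exact Or.inr ⟨l, hl, hb, ha⟩

theorem collin_of_mem {l : Set S} {a b : S} (hl : l ∈ 𝓛) (ha : a ∈ l) (hb : b ∈ l) :
    Collin 𝓛 a b :=
  Or.inr ⟨l, hl, ha, hb⟩

theorem mem_perp_self (a : S) : a ∈ perp 𝓛 a := Or.inl rfl

theorem Collin.exists_line {a b : S} (h : Collin 𝓛 a b) (hne : a ≠ b) :
    ∃ l ∈ 𝓛, a ∈ l ∧ b ∈ l :=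
  h.resolve_left hne

theorem IsPLS.line_eq (hpls : IsPLS 𝓛) {l m : Set S} (hl : l ∈ 𝓛) (hm : m ∈ 𝓛) {x y : S}
    (hxy : x ≠ y) (hxl : x ∈ l) (hyl : y ∈ l) (hxm : x ∈ m) (hym : y ∈ m) : l = m := by
  by_contra hlm
  exact hxy (hpls.2 l hl m hm hlm x y ⟨hxl, hxm⟩ ⟨hyl, hym⟩)

theorem IsSubspace.subset_of_mem {H l : Set S} (hH : IsSubspace 𝓛 H) (hl : l ∈ 𝓛) {x y : S}
    (hx : x ∈ l) (hy : y ∈ l) (hxH : x ∈ H) (hyH : y ∈ H) (hxy : x ≠ y) : l ⊆ H :=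
  hH l hl ⟨x, ⟨hx, hxH⟩, y, ⟨hy, hyH⟩, hxy⟩

theorem IsSubspace.eq_of_mem {H l : Set S} (hH : IsSubspace 𝓛 H) (hl : l ∈ 𝓛)
    (hlH : ¬ l ⊆ H) {x y : S} (hx : x ∈ l) (hy : y ∈ l) (hxH : x ∈ H) (hyH : y ∈ H) :
    x = y := by
  by_contra hxy
  exact hlH (hH.subset_of_mem hl hx hy hxH hyH hxy)

theorem OneOrAll.subset_perp (hoa : OneOrAll 𝓛) {l : Set S} {a x y : S} (hl : l ∈ 𝓛)
    (hx : x ∈ l) (hy : y ∈ l) (hxy : x ≠ y) (hax : Collin 𝓛 a x) (hay : Collin 𝓛 a y) :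
    l ⊆ perp 𝓛 a := by
  intro w hw
  by_cases hal : a ∈ l
  · exact collin_of_mem hl hal hw
  · rcases hoa l hl a hal with ⟨_, _, hunique⟩ | hall
    · exact absurd ((hunique x ⟨hx, hax⟩).trans (hunique y ⟨hy, hay⟩).symm) hxy
    · exact hall w hw

theorem OneOrAll.exists_collin_ne (hoa : OneOrAll 𝓛) {l : Set S} {a y : S} (hl : l ∈ 𝓛)
    (hy : y ∈ l) (hay : ¬ Collin 𝓛 a y) : ∃ x ∈ l, Collin 𝓛 a x ∧ x ≠ y := by
  have hal : a ∉ l := fun h => hay (collin_of_mem hl h hy)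
  rcases hoa l hl a hal with ⟨c, ⟨hcl, hac⟩, _⟩ | hall
  · exact ⟨c, hcl, hac, by rintro rfl; exact hay hac⟩
  · exact absurd (hall y hy) hay

/-- Given a line `N` meeting the subspace `H` only in `c`, and a point `z` not collinear
with `c`: the line joining `z` to its projection on `N`. -/
theorem exists_line_not_subset_not_collin (hoa : OneOrAll 𝓛) {H N : Set S}
    (hH : IsSubspace 𝓛 H) (hN : N ∈ 𝓛) (hNH : ¬ N ⊆ H) {c z : S} (hcN : c ∈ N) (hcH : c ∈ H)
    (hcz : ¬ Collin 𝓛 c z) :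
    ∃ M ∈ 𝓛, z ∈ M ∧ (M ∩ N).Nonempty ∧ ¬ M ⊆ H ∧ ∀ u ∈ M ∩ H, ¬ Collin 𝓛 c u := by
  obtain ⟨y, hyN, hzy, hyc⟩ := hoa.exists_collin_ne hN hcN (fun h => hcz h.symm)
  have hyH : y ∉ H := fun h => hyc (hH.eq_of_mem hN hNH hyN hcN h hcH)
  have hzy_ne : z ≠ y := by
    rintro rfl
    exact hcz (collin_of_mem hN hcN hyN)
  obtain ⟨M, hM, hzM, hyM⟩ := hzy.exists_line hzy_ne
  refine ⟨M, hM, hzM, ⟨y, hyM, hyN⟩, fun h => hyH (h hyM), ?_⟩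
  rintro u ⟨huM, huH⟩ hcu
  have huy : u ≠ y := fun h => hyH (h ▸ huH)
  exact hcz (hoa.subset_perp hM huM hyM huy hcu (collin_of_mem hN hcN hyN) hzM)

theorem not_perp_union_subset (hoa : OneOrAll 𝓛) (hnd : Nondegenerate 𝓛) {Y : Set S}
    (hY : IsSubspace 𝓛 Y) (hYne : Y ≠ Set.univ) {p q : S} (hpq : p ≠ q) (hc : Collin 𝓛 p q) :
    ¬ perp 𝓛 p ∪ perp 𝓛 q ⊆ Y := by
  intro hpqY
  have hpY : perp 𝓛 p ⊆ Y := Set.subset_union_left.trans hpqY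
  have hqY : perp 𝓛 q ⊆ Y := Set.subset_union_right.trans hpqY
  obtain ⟨z, hzY⟩ := (Set.ne_univ_iff_exists_notMem Y).1 hYne
  obtain ⟨L, hL, hpL, hqL⟩ := hc.exists_line hpq
  obtain ⟨r, hrL, hzr, -⟩ := hoa.exists_collin_ne hL hpL (fun h => hzY (hpY h.symm))
  have hrY : r ∈ Y := hpY (collin_of_mem hL hpL hrL)
  obtain ⟨N, hN, hzN, hrN⟩ := hzr.exists_line (fun h => hzY (h ▸ hrY))
  obtain ⟨z', hrz'⟩ := hnd r
  obtain ⟨M, hM, -, -, hMY, hMr⟩ :=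
    exists_line_not_subset_not_collin hoa hY hN (fun h => hzY (h hzN)) hrN hrY hrz'
  obtain ⟨y, hyM, hyY⟩ := Set.not_subset.1 hMY
  obtain ⟨π₁, hπ₁M, hpπ₁, -⟩ := hoa.exists_collin_ne hM hyM (fun h => hyY (hpY h))
  obtain ⟨π₂, hπ₂M, hqπ₂, -⟩ := hoa.exists_collin_ne hM hyM (fun h => hyY (hqY h))
  by_cases hπ : π₁ = π₂
  · subst hπ
    have hLπ := hoa.subset_perp hL hpL hqL hpq hpπ₁.symm hqπ₂.symm
    exact hMr π₁ ⟨hπ₁M, hpY hpπ₁⟩ (hLπ hrL).symm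
  · exact hyY (hY.subset_of_mem hM hπ₁M hπ₂M (hpY hpπ₁) (hqY hqπ₂) hπ hyM)

theorem perp_isSubspace (hoa : OneOrAll 𝓛) (a : S) : IsSubspace 𝓛 (perp 𝓛 a) := by
  rintro l hl ⟨x, ⟨hx, hax⟩, y, ⟨hy, hay⟩, hxy⟩
  exact hoa.subset_perp hl hx hy hxy hax hay

theorem perp_ne_univ (hnd : Nondegenerate 𝓛) (a : S) : perp 𝓛 a ≠ Set.univ := by
  obtain ⟨b, hab⟩ := hnd a
  exact (Set.ne_univ_iff_exists_notMem _).2 ⟨b, hab⟩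

theorem not_perp_subset_perp (hoa : OneOrAll 𝓛) (hnd : Nondegenerate 𝓛) {p q : S}
    (hpq : p ≠ q) : ¬ perp 𝓛 p ⊆ perp 𝓛 q := fun h =>
  not_perp_union_subset hoa hnd (perp_isSubspace hoa q) (perp_ne_univ hnd q) hpq
    (h (mem_perp_self p)).symm (Set.union_subset h subset_rfl)

theorem exists_line_subset_perp_not_subset (hoa : OneOrAll 𝓛) (hnd : Nondegenerate 𝓛)
    {H : Set S} (hH : IsSubspace 𝓛 H) {p c y : S} (hpc : p ≠ c) (hcH : c ∈ H) (hyH : y ∉ H)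
    (hpc' : Collin 𝓛 p c) (hpy : Collin 𝓛 p y) (hcy : Collin 𝓛 c y) :
    ∃ M ∈ 𝓛, M ⊆ perp 𝓛 p ∧ ¬ M ⊆ H ∧ ∀ u ∈ M ∩ H, ¬ Collin 𝓛 c u := by
  obtain ⟨z, hpz, hcz⟩ := Set.not_subset.1 (not_perp_subset_perp hoa hnd hpc)
  have hcy_ne : c ≠ y := fun h => hyH (h ▸ hcH)
  obtain ⟨N, hN, hcN, hyN⟩ := hcy.exists_line hcy_ne
  obtain ⟨M, hM, hzM, ⟨x, hxM, hxN⟩, hMH, hMc⟩ :=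
    exists_line_not_subset_not_collin hoa hH hN (fun h => hyH (h hyN)) hcN hcH hcz
  have hzx : z ≠ x := by
    rintro rfl
    exact hcz (collin_of_mem hN hcN hxN)
  have hNp := hoa.subset_perp hN hcN hyN hcy_ne hpc' hpy
  exact ⟨M, hM, hoa.subset_perp hM hzM hxM hzx hpz (hNp hxN), hMH, hMc⟩

theorem subset_of_perp_inter_subset (hoa : OneOrAll 𝓛) {H M : Set S} (hH : IsSubspace 𝓛 H)
    {p q u : S} (hpq : perp 𝓛 p ∩ perp 𝓛 q ⊆ H) (hM : M ∈ 𝓛) (hMp : M ⊆ perp 𝓛 p)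
    (huM : u ∈ M) (huH : u ∈ H) (hqu : ¬ Collin 𝓛 q u) : M ⊆ H := by
  obtain ⟨v, hvM, hqv, hvu⟩ := hoa.exists_collin_ne hM huM hqu
  exact hH.subset_of_mem hM hvM huM (hpq ⟨hMp hvM, hqv⟩) huH hvu

theorem perp_subset_of_triangle (hoa : OneOrAll 𝓛) (hnd : Nondegenerate 𝓛) {H l : Set S}
    (hH : IsSubspace 𝓛 H) (hHl : ∀ l ∈ 𝓛, (l ∩ H).Nonempty) (hl : l ∈ 𝓛) {p q₁ q₂ : S}
    (hq₁ : q₁ ∈ l) (hq₂ : q₂ ∈ l) (hq : q₁ ≠ q₂) (hp : p ∉ l)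
    (hpq₁ : Collin 𝓛 p q₁) (hpq₂ : Collin 𝓛 p q₂)
    (h₁ : perp 𝓛 p ∩ perp 𝓛 q₁ ⊆ H) (h₂ : perp 𝓛 p ∩ perp 𝓛 q₂ ⊆ H)
    (h₁₂ : perp 𝓛 q₁ ∩ perp 𝓛 q₂ ⊆ H) : perp 𝓛 p ⊆ H := by
  intro b hpb
  by_contra hbH
  obtain ⟨c, hcl, hbc, -⟩ :=
    hoa.exists_collin_ne hl hq₁ (fun h => hbH (h₁ ⟨hpb, h.symm⟩))
  have hcH : c ∈ H := h₁₂ ⟨collin_of_mem hl hq₁ hcl, collin_of_mem hl hq₂ hcl⟩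
  have hpc : p ≠ c := fun h => hp (h ▸ hcl)
  obtain ⟨M, hM, hMp, hMH, hMc⟩ := exists_line_subset_perp_not_subset hoa hnd hH hpc hcH hbH
    (hoa.subset_perp hl hq₁ hq₂ hq hpq₁ hpq₂ hcl) hpb hbc.symm
  obtain ⟨u, huM, huH⟩ := hHl M hM
  by_cases hu : Collin 𝓛 q₁ u ∧ Collin 𝓛 q₂ u
  · exact hMc u ⟨huM, huH⟩ (hoa.subset_perp hl hq₁ hq₂ hq hu.1.symm hu.2.symm hcl).symm
  · refine hMH ?_
    rcases not_and_or.1 hu with hu | hu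
    · exact subset_of_perp_inter_subset hoa hH h₁ hM hMp huM huH hu
    · exact subset_of_perp_inter_subset hoa hH h₂ hM hMp huM huH hu

theorem exists_line_of_perp_inter_subset (hpolar : IsPolarSpace 𝓛) (hnd : Nondegenerate 𝓛)
    {H : Set S} (hH : IsHyperplane 𝓛 H) {a₁ a₂ a₃ : S}
    (hne₁₂ : a₁ ≠ a₂) (hne₁₃ : a₁ ≠ a₃) (hne₂₃ : a₂ ≠ a₃)
    (hc₁₂ : Collin 𝓛 a₁ a₂) (hc₁₃ : Collin 𝓛 a₁ a₃) (hc₂₃ : Collin 𝓛 a₂ a₃)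
    (h₁₂ : perp 𝓛 a₁ ∩ perp 𝓛 a₂ ⊆ H) (h₁₃ : perp 𝓛 a₁ ∩ perp 𝓛 a₃ ⊆ H)
    (h₂₃ : perp 𝓛 a₂ ∩ perp 𝓛 a₃ ⊆ H) :
    ∃ l ∈ 𝓛, a₁ ∈ l ∧ a₂ ∈ l ∧ a₃ ∈ l := by
  obtain ⟨hpls, hoa⟩ := hpolar
  obtain ⟨hHsub, hHne, hHl⟩ := hH
  obtain ⟨l, hl, ha₁l, ha₂l⟩ := hc₁₂.exists_line hne₁₂
  refine ⟨l, hl, ha₁l, ha₂l, ?_⟩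
  by_contra ha₃l
  obtain ⟨m₁, hm₁, ha₂m₁, ha₃m₁⟩ := hc₂₃.exists_line hne₂₃
  obtain ⟨m₂, hm₂, ha₁m₂, ha₃m₂⟩ := hc₁₃.exists_line hne₁₃
  have ha₁m₁ : a₁ ∉ m₁ := fun h =>
    ha₃l (hpls.line_eq hl hm₁ hne₁₂ ha₁l ha₂l h ha₂m₁ ▸ ha₃m₁)
  have ha₂m₂ : a₂ ∉ m₂ := fun h =>
    ha₃l (hpls.line_eq hl hm₂ hne₁₂ ha₁l ha₂l ha₁m₂ h ▸ ha₃m₂)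
  have hperp₁ := perp_subset_of_triangle hoa hnd hHsub hHl hm₁ ha₂m₁ ha₃m₁ hne₂₃ ha₁m₁
    hc₁₂ hc₁₃ h₁₂ h₁₃ h₂₃
  have hperp₂ := perp_subset_of_triangle hoa hnd hHsub hHl hm₂ ha₁m₂ ha₃m₂ hne₁₃ ha₂m₂
    hc₁₂.symm hc₂₃ (by rwa [Set.inter_comm]) h₂₃ h₁₃
  exact not_perp_union_subset hoa hnd hHsub hHne hne₁₂ hc₁₂ (Set.union_subset hperp₁ hperp₂)

end PolarSpace

section Complement

variable {𝓛 : Set (Set S)} {W : Set S}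

theorem AtInfinity.mem {K : Set S} {a : S} (h : AtInfinity 𝓛 W K a) : a ∈ W := by
  obtain ⟨-, -, -, -, -, ha⟩ := h
  exact ha

theorem AtInfinity.isAffineLine {K : Set S} {a : S} (h : AtInfinity 𝓛 W K a) :
    IsAffineLine 𝓛 W K := by
  obtain ⟨k, hk, hkW, rfl, ha⟩ := h
  exact ⟨k, hk, hkW, rfl, ⟨a, ha⟩⟩

theorem AtInfinity.parallel {K L : Set S} {a : S} (hK : AtInfinity 𝓛 W K a)
    (hL : AtInfinity 𝓛 W L a) : Parallel 𝓛 W K L := by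
  obtain ⟨k, hk, hkW, rfl, hak, haW⟩ := hK
  obtain ⟨l, hl, hlW, rfl, hal, -⟩ := hL
  exact ⟨k, hk, l, hl, hkW, hlW, rfl, rfl, ⟨a, ⟨hak, hal⟩, haW⟩⟩

theorem atInfinity_sdiff {n : Set S} (hn : n ∈ 𝓛) {x a : S} (hx : x ∈ n) (hxW : x ∉ W)
    (ha : a ∈ n) (haW : a ∈ W) : AtInfinity 𝓛 W (n \ W) a :=
  ⟨n, hn, fun h => hxW (h hx), rfl, ha, haW⟩

theorem perp_inter_perp_subset_of_equivCls {Ka Kb : Set S} {a b : S}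
    (he : EquivCls 𝓛 W Ka Kb) (ha : AtInfinity 𝓛 W Ka a) (hb : AtInfinity 𝓛 W Kb b) :
    perp 𝓛 a ∩ perp 𝓛 b ⊆ W := by
  rintro x ⟨hax, hbx⟩
  by_contra hxW
  obtain ⟨n, hn, han, hxn⟩ := hax.exists_line (fun h => hxW (h ▸ ha.mem))
  obtain ⟨n', hn', hbn', hxn'⟩ := hbx.exists_line (fun h => hxW (h ▸ hb.mem))
  have hM := atInfinity_sdiff hn hxn hxW han ha.mem
  have hM' := atInfinity_sdiff hn' hxn' hxW hbn' hb.mem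
  exact (he _ _ hM.isAffineLine hb.isAffineLine (hM.parallel ha) (hb.parallel hb)).1
    x ⟨hxn, hxW⟩ _ hM'.isAffineLine ⟨hxn', hxW⟩ (hM'.parallel hb)

theorem collin_of_atInfinity (hoa : OneOrAll 𝓛) (hW : IsSubspace 𝓛 W) {K : Set S} {a b : S}
    (ha : AtInfinity 𝓛 W K a) (hab : perp 𝓛 a ∩ perp 𝓛 b ⊆ W) :
    Collin 𝓛 a b := by
  obtain ⟨k, hk, hkW, -, hak, haW⟩ := ha
  obtain ⟨x, hxk, hxW⟩ := Set.not_subset.1 hkW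
  obtain ⟨c, hck, hbc, -⟩ :=
    hoa.exists_collin_ne hk hxk (fun h => hxW (hab ⟨collin_of_mem hk hak hxk, h⟩))
  have hcW : c ∈ W := hab ⟨collin_of_mem hk hak hck, hbc⟩
  rw [hW.eq_of_mem hk hkW hak hck haW hcW]
  exact hbc.symm

end Complement

theorem statement_13_general (𝓛 : Set (Set S)) (hpolar : IsPolarSpace 𝓛)
    (hnd : Nondegenerate 𝓛)
    (W : Set S) (hsub : IsSubspace 𝓛 W)
    (hhyp : ∃ H : Set S, IsHyperplane 𝓛 H ∧ W ⊆ H)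
    (K₁ K₂ K₃ : Set S)
    (hnp₁₂ : ¬ Parallel 𝓛 W K₁ K₂) (hnp₂₃ : ¬ Parallel 𝓛 W K₂ K₃)
    (hnp₃₁ : ¬ Parallel 𝓛 W K₃ K₁)
    (he₁₂ : EquivCls 𝓛 W K₁ K₂) (he₂₃ : EquivCls 𝓛 W K₂ K₃)
    (he₃₁ : EquivCls 𝓛 W K₃ K₁) :
    ∀ a₁ a₂ a₃ : S, AtInfinity 𝓛 W K₁ a₁ → AtInfinity 𝓛 W K₂ a₂ →
      AtInfinity 𝓛 W K₃ a₃ → ∃ l ∈ 𝓛, a₁ ∈ l ∧ a₂ ∈ l ∧ a₃ ∈ l := by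
  intro a₁ a₂ a₃ hi₁ hi₂ hi₃
  obtain ⟨H, hH, hWH⟩ := hhyp
  have h₁₂ := perp_inter_perp_subset_of_equivCls he₁₂ hi₁ hi₂
  have h₂₃ := perp_inter_perp_subset_of_equivCls he₂₃ hi₂ hi₃
  have h₁₃ : perp 𝓛 a₁ ∩ perp 𝓛 a₃ ⊆ W := by
    rw [Set.inter_comm]
    exact perp_inter_perp_subset_of_equivCls he₃₁ hi₃ hi₁
  have hne₁₂ : a₁ ≠ a₂ := by rintro rfl; exact hnp₁₂ (hi₁.parallel hi₂)
  have hne₂₃ : a₂ ≠ a₃ := by rintro rfl; exact hnp₂₃ (hi₂.parallel hi₃)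
  have hne₁₃ : a₁ ≠ a₃ := by rintro rfl; exact hnp₃₁ (hi₃.parallel hi₁)
  exact exists_line_of_perp_inter_subset hpolar hnd hH hne₁₂ hne₁₃ hne₂₃
    (collin_of_atInfinity hpolar.2 hsub hi₁ h₁₂)
    (collin_of_atInfinity hpolar.2 hsub hi₁ h₁₃)
    (collin_of_atInfinity hpolar.2 hsub hi₂ h₂₃)
    (h₁₂.trans hWH) (h₁₃.trans hWH) (h₂₃.trans hWH)

theorem statement_13 (𝓛 : Set (Set S)) (hpolar : IsPolarSpace 𝓛) (hthick : Thick 𝓛)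
    (hnd : Nondegenerate 𝓛) (hrank : RankAtLeast 𝓛 3)
    (W : Set S) (hsub : IsSubspace 𝓛 W) (hproper : W ≠ Set.univ)
    (hhyp : ∃ H : Set S, IsHyperplane 𝓛 H ∧ W ⊆ H)
    (hnothyp : ¬ IsHyperplane 𝓛 W)
    (K₁ K₂ K₃ : Set S)
    (h₁ : IsAffineLine 𝓛 W K₁) (h₂ : IsAffineLine 𝓛 W K₂) (h₃ : IsAffineLine 𝓛 W K₃)
    (hnp₁₂ : ¬ Parallel 𝓛 W K₁ K₂) (hnp₂₃ : ¬ Parallel 𝓛 W K₂ K₃)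
    (hnp₃₁ : ¬ Parallel 𝓛 W K₃ K₁)
    (he₁₂ : EquivCls 𝓛 W K₁ K₂) (he₂₃ : EquivCls 𝓛 W K₂ K₃)
    (he₃₁ : EquivCls 𝓛 W K₃ K₁) :
    ∀ a₁ a₂ a₃ : S, AtInfinity 𝓛 W K₁ a₁ → AtInfinity 𝓛 W K₂ a₂ →
      AtInfinity 𝓛 W K₃ a₃ → ∃ l ∈ 𝓛, a₁ ∈ l ∧ a₂ ∈ l ∧ a₃ ∈ l :=
  statement_13_general 𝓛 hpolar hnd W hsub hhyp K₁ K₂ K₃ hnp₁₂ hnp₂₃ hnp₃₁ he₁₂ he₂₃ he₃₁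

end PolarComp
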